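/- arXiv:math/0204285 — 2 statements merged into one kernel-verified Lean document; each statement's English description precedes it below -/
import Mathlib

section
/- In Map₂, the ordered products of the entries of the factorizations W₀, W₁ and W₂ are all equal to the identity element 1. -/
/-- A single Hurwitz move: replace two consecutive entries `(x, y)` by `(x y x⁻¹, x)`. -/
def HurwitzMove {G : Type*} [Group G] (F F' : List G) : Prop :=
  ∃ (l₁ l₂ : List G) (x y : G),
    F = l₁ ++ x :: y :: l₂ ∧ F' = l₁ ++ (x * y * x⁻¹) :: x :: l₂

/-- Hurwitz equivalence: the reflexive-symmetric-transitive closure of Hurwitz moves.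
(The symmetric closure accounts for the inverse move `(x, y) ↦ (y, y⁻¹ x y)`.) -/
def HurwitzEquiv {G : Type*} [Group G] : List G → List G → Prop :=
  Relation.EqvGen HurwitzMove

/-- `n`-fold concatenation of a factorization with itself. -/
def fpow {G : Type*} (F : List G) (n : ℕ) : List G :=
  (List.replicate n F).flatten

/-- Simultaneous conjugation of all entries of a factorization by `φ`: `τ ↦ φ⁻¹ τ φ`. -/
def fconj {G : Type*} [Group G] (F : List G) (φ : G) : List G :=
  F.map fun τ => φ⁻¹ * τ * φ

/-- Generators of the free group on five letters. -/
abbrev fg (i : Fin 5) : FreeGroup (Fin 5) := FreeGroup.of i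

/-- The word `ζ₁ζ₂ζ₃ζ₄ζ₅` in the free group. -/
def Δw : FreeGroup (Fin 5) := fg 0 * fg 1 * fg 2 * fg 3 * fg 4

/-- The word `ζ₁ζ₂ζ₃ζ₄ζ₅²ζ₄ζ₃ζ₂ζ₁` in the free group. -/
def Iw : FreeGroup (Fin 5) :=
  fg 0 * fg 1 * fg 2 * fg 3 * fg 4 * fg 4 * fg 3 * fg 2 * fg 1 * fg 0

/-- Relations for the presentation of the genus-2 mapping class group `Map₂`:
commutations `ζᵢζⱼ = ζⱼζᵢ` for `|i - j| ≥ 2`, braid relations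
`ζᵢζᵢ₊₁ζᵢ = ζᵢ₊₁ζᵢζᵢ₊₁`, `(ζ₁ζ₂ζ₃ζ₄ζ₅)⁶ = 1`, `I = ζ₁ζ₂ζ₃ζ₄ζ₅²ζ₄ζ₃ζ₂ζ₁` is central,
and `I² = 1`. -/
def map2Rels : Set (FreeGroup (Fin 5)) :=
  { r | (∃ i j : Fin 5, (i : ℕ) + 2 ≤ (j : ℕ) ∧ r = fg i * fg j * (fg i)⁻¹ * (fg j)⁻¹) ∨
        (∃ i : Fin 4, r = fg i.castSucc * fg i.succ * fg i.castSucc *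
          (fg i.succ * fg i.castSucc * fg i.succ)⁻¹) ∨
        r = Δw ^ 6 ∨
        (∃ i : Fin 5, r = Iw * fg i * Iw⁻¹ * (fg i)⁻¹) ∨
        r = Iw ^ 2 }

/-- The mapping class group of a closed genus-2 surface, via its standard presentation. -/
abbrev Map₂ : Type := PresentedGroup map2Rels

/-- The Dehn twist generators `ζ₁, …, ζ₅` (indexed by `Fin 5`, so `ζ 0 = ζ₁`, …). -/
def ζ (i : Fin 5) : Map₂ := PresentedGroup.of i

/-- The hyperelliptic involution `I = ζ₁ζ₂ζ₃ζ₄ζ₅²ζ₄ζ₃ζ₂ζ₁` as an element of `Map₂`. -/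
def Ihe : Map₂ := ζ 0 * ζ 1 * ζ 2 * ζ 3 * ζ 4 * ζ 4 * ζ 3 * ζ 2 * ζ 1 * ζ 0

/-- The separating Dehn twist `σ = (ζ₁ζ₂)⁶`. -/
def σ : Map₂ := (ζ 0 * ζ 1) ^ 6

/-- The factorization `T = ζ₁·ζ₂·ζ₃·ζ₄·ζ₅·ζ₅·ζ₄·ζ₃·ζ₂·ζ₁`. -/
def T : List Map₂ := [ζ 0, ζ 1, ζ 2, ζ 3, ζ 4, ζ 4, ζ 3, ζ 2, ζ 1, ζ 0]

/-- The factorization `W₀ = (T)²`. -/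
def W₀ : List Map₂ := T ++ T

/-- The factorization `W₁ = (ζ₁·ζ₂·ζ₃·ζ₄·ζ₅)⁶`. -/
def W₁ : List Map₂ := fpow [ζ 0, ζ 1, ζ 2, ζ 3, ζ 4] 6

/-- The factorization `Φ_f = ζ₃·ζ₄·ζ₅·ζ₂·ζ₃·ζ₄·ζ₁·ζ₂·ζ₃`. -/
def Φf : List Map₂ := [ζ 2, ζ 3, ζ 4, ζ 1, ζ 2, ζ 3, ζ 0, ζ 1, ζ 2]

/-- The factorization `W₂ = σ·(ζ₃·ζ₄·ζ₅·ζ₂·ζ₃·ζ₄·ζ₁·ζ₂·ζ₃)²·T`. -/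
def W₂ : List Map₂ := σ :: (Φf ++ Φf ++ T)

/-! Write `D = ζ₁ζ₂ζ₃ζ₄ζ₅`, `D' = ζ₅ζ₄ζ₃ζ₂ζ₁` and `Φ` for the product of `Φ_f`. By the braid
relations, conjugation by `D` shifts `ζᵢ` to `ζᵢ₊₁`; peeling off one block at a time this gives
`D³ = Φ (ζ₄ζ₅)³` and, for the reversed chain, `D'³ = Φ (ζ₁ζ₂)³`. In `Map₂` the product of `T` is
the central involution `I = D D'` and `D⁶ = 1`, so `D'³ = D³ I`; together with
`D³ (ζ₁ζ₂)³ D⁻³ = (ζ₄ζ₅)³` this forces `σ Φ² = I`. The three products are then `I²`, `D⁶` and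
`σ Φ² I`. -/

/-- `a 0, …, a (n - 1)` play the role of the standard generators `σ₁, …, σₙ` of the braid group
on `n + 1` strands; the values of `a` from index `n` on are irrelevant. -/
structure IsBraidChain {M : Type*} [Monoid M] (a : ℕ → M) (n : ℕ) : Prop where
  commute : ∀ i j, i + 2 ≤ j → j < n → Commute (a i) (a j)
  braid : ∀ i, i + 1 < n → a i * a (i + 1) * a i = a (i + 1) * a i * a (i + 1)

section BraidChain

variable {M : Type*} [Monoid M] {a : ℕ → M} {n : ℕ}

def ascProd (a : ℕ → M) (i k : ℕ) : M := ((List.range' i k).map a).prod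

lemma ascProd_succ (a : ℕ → M) (i k : ℕ) : ascProd a i (k + 1) = a i * ascProd a (i + 1) k := by
  simp [ascProd, List.range'_succ]

lemma ascProd_add (a : ℕ → M) (i k l : ℕ) :
    ascProd a i (k + l) = ascProd a i k * ascProd a (i + k) l := by
  rw [ascProd, ascProd, ascProd, ← List.range'_append, List.map_append, List.prod_append, one_mul]

namespace IsBraidChain

lemma commute_ascProd (h : IsBraidChain a n) {m i k : ℕ} (hm : m + 2 ≤ i) (hk : i + k ≤ n) :
    Commute (a m) (ascProd a i k) :=
  Commute.list_prod_right _ _ fun x hx => by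
    obtain ⟨j, hj, rfl⟩ := List.mem_map.1 hx
    rw [List.mem_range'_1] at hj
    exact h.commute m j (by omega) (by omega)

lemma semiconjBy_ascProd (h : IsBraidChain a n) {i j k : ℕ} (hij : i ≤ j) (hj : j + 1 < i + k)
    (hk : i + k ≤ n) : SemiconjBy (ascProd a i k) (a j) (a (j + 1)) := by
  induction k generalizing i with
  | zero => omega
  | succ k ih =>
    rw [ascProd_succ]
    rcases hij.eq_or_lt with rfl | hij
    · obtain ⟨k, rfl⟩ : ∃ k', k = k' + 1 := ⟨k - 1, by omega⟩
      have hc := h.commute_ascProd (m := i) (i := i + 2) (k := k) le_rfl (by omega)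
      rw [ascProd_succ]
      calc a i * (a (i + 1) * ascProd a (i + 2) k) * a i
          = a i * a (i + 1) * a i * ascProd a (i + 2) k := by
            rw [mul_assoc (a i * a (i + 1)), hc.eq]; simp only [mul_assoc]
        _ = a (i + 1) * (a i * (a (i + 1) * ascProd a (i + 2) k)) := by
            rw [h.braid i (by omega)]; simp only [mul_assoc]
    · exact SemiconjBy.mul_left (h.commute i (j + 1) (by omega) (by omega))
        (ih (by omega) (by omega) (by omega))

lemma semiconjBy_pow (h : IsBraidChain a n) {m j : ℕ} (hj : j + m < n) :
    SemiconjBy (ascProd a 0 n ^ m) (a j) (a (j + m)) := by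
  induction m generalizing j with
  | zero => simp
  | succ m ih =>
    rw [pow_succ, ← add_assoc, add_right_comm]
    exact (ih (by omega)).mul_left (h.semiconjBy_ascProd (Nat.zero_le j) (by omega) (by omega))

lemma semiconjBy_pow_ascProd (h : IsBraidChain a n) {m i k : ℕ} (hk : i + k + m ≤ n) :
    SemiconjBy (ascProd a 0 n ^ m) (ascProd a i k) (ascProd a (i + m) k) := by
  induction k generalizing i with
  | zero => exact SemiconjBy.one_right _
  | succ k ih =>
    rw [ascProd_succ, ascProd_succ, add_right_comm]
    exact (h.semiconjBy_pow (by omega)).mul_right (ih (by omega))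

lemma pow_succ_eq_mul_pow_mul (h : IsBraidChain a n) {k l m : ℕ} (hn : k + l = n) (hm : k + m ≤ n) :
    ascProd a 0 n ^ (m + 1) = ascProd a m k * ascProd a 0 n ^ m * ascProd a k l := by
  have hsplit : ascProd a 0 n = ascProd a 0 k * ascProd a k l := by
    rw [← hn, ascProd_add, zero_add]
  calc ascProd a 0 n ^ (m + 1) = ascProd a 0 n ^ m * (ascProd a 0 k * ascProd a k l) := by
        rw [pow_succ, ← hsplit]
    _ = ascProd a m k * ascProd a 0 n ^ m * ascProd a k l := by
        rw [← mul_assoc, (h.semiconjBy_pow_ascProd (i := 0) (by omega)).eq, zero_add]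

lemma reverse (h : IsBraidChain a n) : IsBraidChain (fun i => a (n - 1 - i)) n where
  commute i j hij hj := (h.commute (n - 1 - j) (n - 1 - i) (by omega) (by omega)).symm
  braid i hi := by
    have e : n - 1 - i = n - 1 - (i + 1) + 1 := by omega
    simp only [e]
    exact (h.braid _ (by omega)).symm

end IsBraidChain

lemma mul_pow_three_comm_of_braid {x y : M} (h : x * y * x = y * x * y) :
    (x * y) ^ 3 = (y * x) ^ 3 := by
  calc (x * y) ^ 3 = x * y * x * (y * x * y) := by
        simp only [pow_succ, pow_zero, one_mul, mul_assoc]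
    _ = x * y * x * (x * y * x) := by rw [← h]
    _ = y * x * y * (x * y * x) := by rw [h]
    _ = (y * x) ^ 3 := by simp only [pow_succ, pow_zero, one_mul, mul_assoc]

/-- The positive braid on six strands that crosses the first three strands over the last three;
for the chain `ζ₁, …, ζ₅` it is the product of `Φ_f`. -/
def blockSwap (a : ℕ → M) : M := ascProd a 2 3 * ascProd a 1 3 * ascProd a 0 3

namespace IsBraidChain

lemma pow_three_eq_blockSwap_mul (h : IsBraidChain a 5) :
    ascProd a 0 5 ^ 3 = blockSwap a * ascProd a 3 2 ^ 3 := by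
  rw [h.pow_succ_eq_mul_pow_mul (k := 3) (l := 2) (m := 2) rfl (by norm_num),
    h.pow_succ_eq_mul_pow_mul (k := 3) (l := 2) (m := 1) rfl (by norm_num),
    h.pow_succ_eq_mul_pow_mul (k := 3) (l := 2) (m := 0) rfl (by norm_num)]
  simp only [blockSwap, pow_succ, pow_zero, one_mul, mul_one, mul_assoc]

lemma blockSwap_reverse (h : IsBraidChain a 5) :
    blockSwap (fun i => a (5 - 1 - i)) = blockSwap a := by
  have c (i j : ℕ) (hij : i + 2 ≤ j := by omega) (hj : j < 5 := by omega) (x : M) :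
      a i * (a j * x) = a j * (a i * x) :=
    (h.commute i j hij hj).left_comm x
  simp only [blockSwap, ascProd, List.range'_succ, List.range'_zero, List.map_cons, List.map_nil,
    List.prod_cons, List.prod_nil, Nat.reduceAdd, Nat.reduceSub, mul_one, mul_assoc]
  rw [c 0 3, c 1 3, c 1 4, c 2 4, c 0 4, c 1 4, c 0 2, c 1 3, c 0 3]

lemma reverse_pow_three_eq_blockSwap_mul (h : IsBraidChain a 5) :
    ascProd (fun i => a (5 - 1 - i)) 0 5 ^ 3 = blockSwap a * ascProd a 0 2 ^ 3 := by
  rw [h.reverse.pow_three_eq_blockSwap_mul, h.blockSwap_reverse]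
  simpa [ascProd, List.range'_succ] using
    congrArg (blockSwap a * ·) (mul_pow_three_comm_of_braid (h.braid 0 (by norm_num))).symm

end IsBraidChain

end BraidChain

lemma prod_fpow {M : Type*} [Monoid M] (F : List M) (n : ℕ) : (fpow F n).prod = F.prod ^ n := by
  rw [fpow, List.prod_flatten, List.map_replicate, List.prod_replicate]

section Map₂

open Fin.NatCast

lemma ζ_commute {i j : Fin 5} (hij : (i : ℕ) + 2 ≤ j) : Commute (ζ i) (ζ j) :=
  mul_inv_eq_iff_eq_mul.1 <| PresentedGroup.mk_eq_mk_of_mul_inv_mem (Or.inl ⟨i, j, hij, rfl⟩)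

lemma ζ_braid (i : Fin 4) :
    ζ i.castSucc * ζ i.succ * ζ i.castSucc = ζ i.succ * ζ i.castSucc * ζ i.succ :=
  PresentedGroup.mk_eq_mk_of_mul_inv_mem (Or.inr (Or.inl ⟨i, rfl⟩))

lemma Ihe_mul_ζ (i : Fin 5) : Ihe * ζ i = ζ i * Ihe :=
  mul_inv_eq_iff_eq_mul.1 <|
    PresentedGroup.mk_eq_mk_of_mul_inv_mem (Or.inr (Or.inr (Or.inr (Or.inl ⟨i, rfl⟩))))

lemma chain_pow_six : (ζ 0 * ζ 1 * ζ 2 * ζ 3 * ζ 4) ^ 6 = 1 := by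
  have h := PresentedGroup.one_of_mem (rels := map2Rels) (x := Δw ^ 6)
    (Or.inr (Or.inr (Or.inl rfl)))
  rwa [map_pow] at h

lemma Ihe_mul_self : Ihe * Ihe = 1 := by
  have h := PresentedGroup.one_of_mem (rels := map2Rels) (x := Iw ^ 2)
    (Or.inr (Or.inr (Or.inr (Or.inr rfl))))
  rwa [map_pow, pow_two] at h

lemma commute_Ihe (g : Map₂) : Commute Ihe g := by
  have hg : g ∈ Subgroup.centralizer {Ihe} :=
    PresentedGroup.generated_by _ _
      (fun i => Subgroup.mem_centralizer_singleton_iff.2 (Ihe_mul_ζ i).symm) g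
  exact (Subgroup.mem_centralizer_singleton_iff.1 hg).symm

lemma isBraidChain_ζ : IsBraidChain (fun i : ℕ => ζ (i : Fin 5)) 5 where
  commute i j hij hj := ζ_commute (by simp only [Fin.val_natCast]; omega)
  braid i hi := by
    have h := ζ_braid (i : Fin 4)
    have h_castSucc : ((i : Fin 4).castSucc : Fin 5) = i :=
      Fin.ext (by simp only [Fin.val_castSucc, Fin.val_natCast]; omega)
    have h_succ : ((i : Fin 4).succ : Fin 5) = ↑(i + 1) :=
      Fin.ext (by simp only [Fin.val_succ, Fin.val_natCast]; omega)
    rwa [h_castSucc, h_succ] at h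

lemma σ_mul_Φf_prod_sq : σ * Φf.prod ^ 2 = Ihe := by
  let z : ℕ → Map₂ := fun i => ζ (i : Fin 5)
  have hz : IsBraidChain z 5 := isBraidChain_ζ
  set D := ascProd z 0 5
  set P := blockSwap z
  set A := ascProd z 0 2 ^ 3
  set B := ascProd z 3 2 ^ 3
  have hΦ : Φf.prod = P := by simp [Φf, P, blockSwap, ascProd, List.range'_succ, z, mul_assoc]
  have hσ : σ = A ^ 2 := by simp [σ, A, ascProd, List.range'_succ, z, ← pow_mul]
  have hD6 : D ^ 6 = 1 := by
    simpa [D, ascProd, List.range'_succ, z, mul_assoc] using chain_pow_six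
  have hPB : D ^ 3 = P * B := hz.pow_three_eq_blockSwap_mul
  have hAB : D ^ 3 * A = B * D ^ 3 :=
    ((hz.semiconjBy_pow_ascProd (m := 3) (i := 0) (k := 2) (by norm_num)).pow_right 3).eq
  -- the reversed chain is `D' = ζ₅ζ₄ζ₃ζ₂ζ₁`, and `D D'` is the product of `T`
  have hrev : ascProd (fun i => z (5 - 1 - i)) 0 5 = D⁻¹ * Ihe :=
    eq_inv_mul_of_mul_eq (by simp [Ihe, D, ascProd, List.range'_succ, z, mul_assoc])
  have hD3 : (D ^ 3)⁻¹ = D ^ 3 := inv_eq_of_mul_eq_one_right (by rw [← pow_add, hD6])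
  have hI3 : Ihe ^ 3 = Ihe := by rw [pow_succ, pow_two, Ihe_mul_self, one_mul]
  have hPA : P * A = D ^ 3 * Ihe := by
    rw [← hz.reverse_pow_three_eq_blockSwap_mul, hrev, (commute_Ihe D⁻¹).symm.mul_pow, inv_pow,
      hD3, hI3]
  have hP : P = D ^ 3 * B⁻¹ := eq_mul_inv_of_mul_eq hPB.symm
  have hBD : B⁻¹ * D ^ 3 = D ^ 3 * A⁻¹ := by
    rw [inv_mul_eq_iff_eq_mul, ← mul_assoc, ← hAB, mul_inv_cancel_right]
  calc σ * Φf.prod ^ 2 = A ^ 2 * (P * (P * A) * A⁻¹) := by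
        rw [hσ, hΦ, ← mul_assoc P P A, mul_inv_cancel_right, sq P]
    _ = A ^ 2 * (D ^ 3 * (B⁻¹ * D ^ 3) * Ihe * A⁻¹) := by rw [hPA, hP]; group
    _ = A ^ 2 * (D ^ 6 * A⁻¹ * (Ihe * A⁻¹)) := by rw [hBD]; group
    _ = Ihe := by rw [hD6, (commute_Ihe A⁻¹).eq]; group

end Map₂

/-- In `Map₂`, the ordered products of the entries of `W₀`, `W₁` and `W₂` all equal `1`. -/
theorem products_eq_one : W₀.prod = 1 ∧ W₁.prod = 1 ∧ W₂.prod = 1 := by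
  have hT : T.prod = Ihe := by simp [T, Ihe, mul_assoc]
  refine ⟨?_, ?_, ?_⟩
  · rw [W₀, List.prod_append, hT, Ihe_mul_self]
  · rw [W₁, prod_fpow]
    simpa [mul_assoc] using chain_pow_six
  · rw [W₂, List.prod_cons, List.prod_append, List.prod_append, hT, ← sq, ← mul_assoc,
      σ_mul_Φf_prod_sq, Ihe_mul_self]
end

section
/- Let Φ_f denote the 9-entry factorization ζ₃·ζ₄·ζ₅·ζ₂·ζ₃·ζ₄·ζ₁·ζ₂·ζ₃ in Map₂. Then: (a) the factorization (ζ₁·ζ₂)³·Φ_f is Hurwitz equivalent to (ζ₁·ζ₂·ζ₃·ζ₄·ζ₅)³; and (b) the factorization (ζ₄·ζ₅)³·(Φ_f)² is Hurwitz equivalent to Φ_f·(ζ₁·ζ₂·ζ₃·ζ₄·ζ₅)³. -/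
section Helpers
variable {G : Type*} [Group G]

lemma he_trans {a b c : List G} (h1 : HurwitzEquiv a b) (h2 : HurwitzEquiv b c) :
    HurwitzEquiv a c := Relation.EqvGen.trans a b c h1 h2

lemma he_swap (l₁ l₂ : List G) (x y : G) (h : x * y = y * x) :
    HurwitzEquiv (l₁ ++ x :: y :: l₂) (l₁ ++ y :: x :: l₂) :=
  Relation.EqvGen.rel _ _ ⟨l₁, l₂, x, y, rfl, by rw [h, mul_inv_cancel_right]⟩

lemma he_braid (l₁ l₂ : List G) (x y : G) (h : x * y * x = y * x * y) :
    HurwitzEquiv (l₁ ++ x :: y :: x :: l₂) (l₁ ++ y :: x :: y :: l₂) := by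
  have h1 : HurwitzMove (l₁ ++ x :: y :: x :: l₂) (l₁ ++ x :: (y * x * y⁻¹) :: y :: l₂) :=
    ⟨l₁ ++ [x], l₂, y, x, by simp, by simp⟩
  have h2 : HurwitzMove (l₁ ++ x :: (y * x * y⁻¹) :: y :: l₂) (l₁ ++ y :: x :: y :: l₂) := by
    refine ⟨l₁, y :: l₂, x, y * x * y⁻¹, rfl, ?_⟩
    have hx : x * (y * x * y⁻¹) * x⁻¹ = y := by
      have hh : x * (y * x * y⁻¹) * x⁻¹ = x * y * x * (y⁻¹ * x⁻¹) := by group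
      rw [hh, h]; group
    rw [hx]
  exact Relation.EqvGen.trans _ _ _ (Relation.EqvGen.rel _ _ h1) (Relation.EqvGen.rel _ _ h2)

lemma hm_append_left (C : List G) {F F' : List G} (h : HurwitzMove F F') :
    HurwitzMove (C ++ F) (C ++ F') := by
  obtain ⟨l₁, l₂, x, y, h1, h2⟩ := h
  exact ⟨C ++ l₁, l₂, x, y, by simp [h1], by simp [h2]⟩

lemma hm_append_right (C : List G) {F F' : List G} (h : HurwitzMove F F') :
    HurwitzMove (F ++ C) (F' ++ C) := by
  obtain ⟨l₁, l₂, x, y, h1, h2⟩ := h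
  exact ⟨l₁, l₂ ++ C, x, y, by simp [h1], by simp [h2]⟩

lemma he_append_left (C : List G) {F F' : List G} (h : HurwitzEquiv F F') :
    HurwitzEquiv (C ++ F) (C ++ F') := by
  induction h with
  | rel _ _ h => exact Relation.EqvGen.rel _ _ (hm_append_left C h)
  | refl _ => exact Relation.EqvGen.refl _
  | symm _ _ _ ih => exact Relation.EqvGen.symm _ _ ih
  | trans a b c _ _ ih1 ih2 => exact Relation.EqvGen.trans _ _ _ ih1 ih2

lemma he_append_right (C : List G) {F F' : List G} (h : HurwitzEquiv F F') :
    HurwitzEquiv (F ++ C) (F' ++ C) := by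
  induction h with
  | rel _ _ h => exact Relation.EqvGen.rel _ _ (hm_append_right C h)
  | refl _ => exact Relation.EqvGen.refl _
  | symm _ _ _ ih => exact Relation.EqvGen.symm _ _ ih
  | trans a b c _ _ ih1 ih2 => exact Relation.EqvGen.trans _ _ _ ih1 ih2

end Helpers

lemma zeta_mk (i : Fin 5) : ζ i = PresentedGroup.mk map2Rels (fg i) := rfl

lemma rel_one {r : FreeGroup (Fin 5)} (h : r ∈ map2Rels) :
    PresentedGroup.mk map2Rels r = 1 :=
  (QuotientGroup.eq_one_iff r).mpr (Subgroup.subset_normalClosure h)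

lemma comm_rel {i j : Fin 5} (h : (i : ℕ) + 2 ≤ (j : ℕ)) : ζ i * ζ j = ζ j * ζ i := by
  have h1 := rel_one (Or.inl ⟨i, j, h, rfl⟩)
  rw [map_mul, map_mul, map_mul, map_inv, map_inv, ← zeta_mk, ← zeta_mk,
    mul_inv_eq_one] at h1
  exact mul_inv_eq_iff_eq_mul.mp h1

lemma braid_rel {a b : Fin 5} (h : (a : ℕ) + 1 = (b : ℕ)) :
    ζ a * ζ b * ζ a = ζ b * ζ a * ζ b := by
  have hb := b.isLt
  have ha4 : (a : ℕ) < 4 := by omega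
  have hca : (⟨(a : ℕ), ha4⟩ : Fin 4).castSucc = a := by
    apply Fin.ext; simp
  have hsb : (⟨(a : ℕ), ha4⟩ : Fin 4).succ = b := by
    apply Fin.ext; simp [Fin.val_succ, h]
  have h1 := rel_one (Or.inr (Or.inl ⟨⟨(a : ℕ), ha4⟩, rfl⟩))
  rw [hca, hsb, map_mul, map_mul, map_mul, map_inv, map_mul, map_mul,
    ← zeta_mk, ← zeta_mk, mul_inv_eq_one] at h1
  exact h1

lemma b0 : ζ 0 * ζ 1 * ζ 0 = ζ 1 * ζ 0 * ζ 1 := braid_rel (by decide)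
lemma b1 : ζ 1 * ζ 2 * ζ 1 = ζ 2 * ζ 1 * ζ 2 := braid_rel (by decide)
lemma b2 : ζ 2 * ζ 3 * ζ 2 = ζ 3 * ζ 2 * ζ 3 := braid_rel (by decide)
lemma b3 : ζ 3 * ζ 4 * ζ 3 = ζ 4 * ζ 3 * ζ 4 := braid_rel (by decide)
lemma c02 : ζ 0 * ζ 2 = ζ 2 * ζ 0 := comm_rel (by decide)
lemma c03 : ζ 0 * ζ 3 = ζ 3 * ζ 0 := comm_rel (by decide)
lemma c04 : ζ 0 * ζ 4 = ζ 4 * ζ 0 := comm_rel (by decide)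
lemma c13 : ζ 1 * ζ 3 = ζ 3 * ζ 1 := comm_rel (by decide)
lemma c14 : ζ 1 * ζ 4 = ζ 4 * ζ 1 := comm_rel (by decide)
lemma c24 : ζ 2 * ζ 4 = ζ 4 * ζ 2 := comm_rel (by decide)

lemma chainA : HurwitzEquiv [ζ 0, ζ 1, ζ 0, ζ 1, ζ 0, ζ 1, ζ 2, ζ 3, ζ 4, ζ 1, ζ 2, ζ 3, ζ 0, ζ 1, ζ 2] [ζ 0, ζ 1, ζ 2, ζ 3, ζ 4, ζ 0, ζ 1, ζ 2, ζ 3, ζ 4, ζ 0, ζ 1, ζ 2, ζ 3, ζ 4] := by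
  have sa0 : HurwitzEquiv [ζ 0, ζ 1, ζ 0, ζ 1, ζ 0, ζ 1, ζ 2, ζ 3, ζ 4, ζ 1, ζ 2, ζ 3, ζ 0, ζ 1, ζ 2] [ζ 0, ζ 1, ζ 0, ζ 1, ζ 0, ζ 1, ζ 2, ζ 3, ζ 1, ζ 4, ζ 2, ζ 3, ζ 0, ζ 1, ζ 2] :=
    he_swap [ζ 0, ζ 1, ζ 0, ζ 1, ζ 0, ζ 1, ζ 2, ζ 3] [ζ 2, ζ 3, ζ 0, ζ 1, ζ 2] (ζ 4) (ζ 1) (c14).symm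
  have sa1 : HurwitzEquiv [ζ 0, ζ 1, ζ 0, ζ 1, ζ 0, ζ 1, ζ 2, ζ 3, ζ 1, ζ 4, ζ 2, ζ 3, ζ 0, ζ 1, ζ 2] [ζ 0, ζ 1, ζ 0, ζ 1, ζ 0, ζ 1, ζ 2, ζ 1, ζ 3, ζ 4, ζ 2, ζ 3, ζ 0, ζ 1, ζ 2] :=
    he_swap [ζ 0, ζ 1, ζ 0, ζ 1, ζ 0, ζ 1, ζ 2] [ζ 4, ζ 2, ζ 3, ζ 0, ζ 1, ζ 2] (ζ 3) (ζ 1) (c13).symm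
  have sa2 : HurwitzEquiv [ζ 0, ζ 1, ζ 0, ζ 1, ζ 0, ζ 1, ζ 2, ζ 1, ζ 3, ζ 4, ζ 2, ζ 3, ζ 0, ζ 1, ζ 2] [ζ 0, ζ 1, ζ 0, ζ 1, ζ 0, ζ 1, ζ 2, ζ 1, ζ 3, ζ 2, ζ 4, ζ 3, ζ 0, ζ 1, ζ 2] :=
    he_swap [ζ 0, ζ 1, ζ 0, ζ 1, ζ 0, ζ 1, ζ 2, ζ 1, ζ 3] [ζ 3, ζ 0, ζ 1, ζ 2] (ζ 4) (ζ 2) (c24).symm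
  have sa3 : HurwitzEquiv [ζ 0, ζ 1, ζ 0, ζ 1, ζ 0, ζ 1, ζ 2, ζ 1, ζ 3, ζ 2, ζ 4, ζ 3, ζ 0, ζ 1, ζ 2] [ζ 0, ζ 1, ζ 0, ζ 1, ζ 0, ζ 1, ζ 2, ζ 1, ζ 3, ζ 2, ζ 4, ζ 0, ζ 3, ζ 1, ζ 2] :=
    he_swap [ζ 0, ζ 1, ζ 0, ζ 1, ζ 0, ζ 1, ζ 2, ζ 1, ζ 3, ζ 2, ζ 4] [ζ 1, ζ 2] (ζ 3) (ζ 0) (c03).symm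
  have sa4 : HurwitzEquiv [ζ 0, ζ 1, ζ 0, ζ 1, ζ 0, ζ 1, ζ 2, ζ 1, ζ 3, ζ 2, ζ 4, ζ 0, ζ 3, ζ 1, ζ 2] [ζ 0, ζ 1, ζ 0, ζ 1, ζ 0, ζ 1, ζ 2, ζ 1, ζ 3, ζ 2, ζ 0, ζ 4, ζ 3, ζ 1, ζ 2] :=
    he_swap [ζ 0, ζ 1, ζ 0, ζ 1, ζ 0, ζ 1, ζ 2, ζ 1, ζ 3, ζ 2] [ζ 3, ζ 1, ζ 2] (ζ 4) (ζ 0) (c04).symm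
  have sa5 : HurwitzEquiv [ζ 0, ζ 1, ζ 0, ζ 1, ζ 0, ζ 1, ζ 2, ζ 1, ζ 3, ζ 2, ζ 0, ζ 4, ζ 3, ζ 1, ζ 2] [ζ 0, ζ 1, ζ 0, ζ 1, ζ 0, ζ 1, ζ 2, ζ 1, ζ 3, ζ 0, ζ 2, ζ 4, ζ 3, ζ 1, ζ 2] :=
    he_swap [ζ 0, ζ 1, ζ 0, ζ 1, ζ 0, ζ 1, ζ 2, ζ 1, ζ 3] [ζ 4, ζ 3, ζ 1, ζ 2] (ζ 2) (ζ 0) (c02).symm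
  have sa6 : HurwitzEquiv [ζ 0, ζ 1, ζ 0, ζ 1, ζ 0, ζ 1, ζ 2, ζ 1, ζ 3, ζ 0, ζ 2, ζ 4, ζ 3, ζ 1, ζ 2] [ζ 0, ζ 1, ζ 0, ζ 1, ζ 0, ζ 1, ζ 2, ζ 1, ζ 0, ζ 3, ζ 2, ζ 4, ζ 3, ζ 1, ζ 2] :=
    he_swap [ζ 0, ζ 1, ζ 0, ζ 1, ζ 0, ζ 1, ζ 2, ζ 1] [ζ 2, ζ 4, ζ 3, ζ 1, ζ 2] (ζ 3) (ζ 0) (c03).symm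
  have sa7 : HurwitzEquiv [ζ 0, ζ 1, ζ 0, ζ 1, ζ 0, ζ 1, ζ 2, ζ 1, ζ 0, ζ 3, ζ 2, ζ 4, ζ 3, ζ 1, ζ 2] [ζ 0, ζ 1, ζ 0, ζ 1, ζ 0, ζ 1, ζ 2, ζ 1, ζ 0, ζ 3, ζ 2, ζ 4, ζ 1, ζ 3, ζ 2] :=
    he_swap [ζ 0, ζ 1, ζ 0, ζ 1, ζ 0, ζ 1, ζ 2, ζ 1, ζ 0, ζ 3, ζ 2, ζ 4] [ζ 2] (ζ 3) (ζ 1) (c13).symm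
  have sa8 : HurwitzEquiv [ζ 0, ζ 1, ζ 0, ζ 1, ζ 0, ζ 1, ζ 2, ζ 1, ζ 0, ζ 3, ζ 2, ζ 4, ζ 1, ζ 3, ζ 2] [ζ 0, ζ 1, ζ 0, ζ 1, ζ 0, ζ 1, ζ 2, ζ 1, ζ 0, ζ 3, ζ 2, ζ 1, ζ 4, ζ 3, ζ 2] :=
    he_swap [ζ 0, ζ 1, ζ 0, ζ 1, ζ 0, ζ 1, ζ 2, ζ 1, ζ 0, ζ 3, ζ 2] [ζ 3, ζ 2] (ζ 4) (ζ 1) (c14).symm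
  have sa9 : HurwitzEquiv [ζ 0, ζ 1, ζ 0, ζ 1, ζ 0, ζ 1, ζ 2, ζ 1, ζ 0, ζ 3, ζ 2, ζ 1, ζ 4, ζ 3, ζ 2] [ζ 0, ζ 1, ζ 0, ζ 1, ζ 0, ζ 2, ζ 1, ζ 2, ζ 0, ζ 3, ζ 2, ζ 1, ζ 4, ζ 3, ζ 2] :=
    he_braid [ζ 0, ζ 1, ζ 0, ζ 1, ζ 0] [ζ 0, ζ 3, ζ 2, ζ 1, ζ 4, ζ 3, ζ 2] (ζ 1) (ζ 2) b1
  have sa10 : HurwitzEquiv [ζ 0, ζ 1, ζ 0, ζ 1, ζ 0, ζ 2, ζ 1, ζ 2, ζ 0, ζ 3, ζ 2, ζ 1, ζ 4, ζ 3, ζ 2] [ζ 0, ζ 1, ζ 0, ζ 1, ζ 2, ζ 0, ζ 1, ζ 2, ζ 0, ζ 3, ζ 2, ζ 1, ζ 4, ζ 3, ζ 2] :=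
    he_swap [ζ 0, ζ 1, ζ 0, ζ 1] [ζ 1, ζ 2, ζ 0, ζ 3, ζ 2, ζ 1, ζ 4, ζ 3, ζ 2] (ζ 0) (ζ 2) c02
  have sa11 : HurwitzEquiv [ζ 0, ζ 1, ζ 0, ζ 1, ζ 2, ζ 0, ζ 1, ζ 2, ζ 0, ζ 3, ζ 2, ζ 1, ζ 4, ζ 3, ζ 2] [ζ 0, ζ 1, ζ 0, ζ 1, ζ 2, ζ 0, ζ 1, ζ 0, ζ 2, ζ 3, ζ 2, ζ 1, ζ 4, ζ 3, ζ 2] :=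
    he_swap [ζ 0, ζ 1, ζ 0, ζ 1, ζ 2, ζ 0, ζ 1] [ζ 3, ζ 2, ζ 1, ζ 4, ζ 3, ζ 2] (ζ 2) (ζ 0) (c02).symm
  have sa12 : HurwitzEquiv [ζ 0, ζ 1, ζ 0, ζ 1, ζ 2, ζ 0, ζ 1, ζ 0, ζ 2, ζ 3, ζ 2, ζ 1, ζ 4, ζ 3, ζ 2] [ζ 0, ζ 1, ζ 0, ζ 1, ζ 2, ζ 1, ζ 0, ζ 1, ζ 2, ζ 3, ζ 2, ζ 1, ζ 4, ζ 3, ζ 2] :=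
    he_braid [ζ 0, ζ 1, ζ 0, ζ 1, ζ 2] [ζ 2, ζ 3, ζ 2, ζ 1, ζ 4, ζ 3, ζ 2] (ζ 0) (ζ 1) b0
  have sa13 : HurwitzEquiv [ζ 0, ζ 1, ζ 0, ζ 1, ζ 2, ζ 1, ζ 0, ζ 1, ζ 2, ζ 3, ζ 2, ζ 1, ζ 4, ζ 3, ζ 2] [ζ 0, ζ 1, ζ 0, ζ 2, ζ 1, ζ 2, ζ 0, ζ 1, ζ 2, ζ 3, ζ 2, ζ 1, ζ 4, ζ 3, ζ 2] :=
    he_braid [ζ 0, ζ 1, ζ 0] [ζ 0, ζ 1, ζ 2, ζ 3, ζ 2, ζ 1, ζ 4, ζ 3, ζ 2] (ζ 1) (ζ 2) b1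
  have sa14 : HurwitzEquiv [ζ 0, ζ 1, ζ 0, ζ 2, ζ 1, ζ 2, ζ 0, ζ 1, ζ 2, ζ 3, ζ 2, ζ 1, ζ 4, ζ 3, ζ 2] [ζ 0, ζ 1, ζ 2, ζ 0, ζ 1, ζ 2, ζ 0, ζ 1, ζ 2, ζ 3, ζ 2, ζ 1, ζ 4, ζ 3, ζ 2] :=
    he_swap [ζ 0, ζ 1] [ζ 1, ζ 2, ζ 0, ζ 1, ζ 2, ζ 3, ζ 2, ζ 1, ζ 4, ζ 3, ζ 2] (ζ 0) (ζ 2) c02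
  have sa15 : HurwitzEquiv [ζ 0, ζ 1, ζ 2, ζ 0, ζ 1, ζ 2, ζ 0, ζ 1, ζ 2, ζ 3, ζ 2, ζ 1, ζ 4, ζ 3, ζ 2] [ζ 0, ζ 1, ζ 2, ζ 0, ζ 1, ζ 2, ζ 0, ζ 1, ζ 3, ζ 2, ζ 3, ζ 1, ζ 4, ζ 3, ζ 2] :=
    he_braid [ζ 0, ζ 1, ζ 2, ζ 0, ζ 1, ζ 2, ζ 0, ζ 1] [ζ 1, ζ 4, ζ 3, ζ 2] (ζ 2) (ζ 3) b2
  have sa16 : HurwitzEquiv [ζ 0, ζ 1, ζ 2, ζ 0, ζ 1, ζ 2, ζ 0, ζ 1, ζ 3, ζ 2, ζ 3, ζ 1, ζ 4, ζ 3, ζ 2] [ζ 0, ζ 1, ζ 2, ζ 0, ζ 1, ζ 2, ζ 0, ζ 3, ζ 1, ζ 2, ζ 3, ζ 1, ζ 4, ζ 3, ζ 2] :=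
    he_swap [ζ 0, ζ 1, ζ 2, ζ 0, ζ 1, ζ 2, ζ 0] [ζ 2, ζ 3, ζ 1, ζ 4, ζ 3, ζ 2] (ζ 1) (ζ 3) c13
  have sa17 : HurwitzEquiv [ζ 0, ζ 1, ζ 2, ζ 0, ζ 1, ζ 2, ζ 0, ζ 3, ζ 1, ζ 2, ζ 3, ζ 1, ζ 4, ζ 3, ζ 2] [ζ 0, ζ 1, ζ 2, ζ 0, ζ 1, ζ 2, ζ 3, ζ 0, ζ 1, ζ 2, ζ 3, ζ 1, ζ 4, ζ 3, ζ 2] :=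
    he_swap [ζ 0, ζ 1, ζ 2, ζ 0, ζ 1, ζ 2] [ζ 1, ζ 2, ζ 3, ζ 1, ζ 4, ζ 3, ζ 2] (ζ 0) (ζ 3) c03
  have sa18 : HurwitzEquiv [ζ 0, ζ 1, ζ 2, ζ 0, ζ 1, ζ 2, ζ 3, ζ 0, ζ 1, ζ 2, ζ 3, ζ 1, ζ 4, ζ 3, ζ 2] [ζ 0, ζ 1, ζ 2, ζ 0, ζ 1, ζ 2, ζ 3, ζ 0, ζ 1, ζ 2, ζ 1, ζ 3, ζ 4, ζ 3, ζ 2] :=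
    he_swap [ζ 0, ζ 1, ζ 2, ζ 0, ζ 1, ζ 2, ζ 3, ζ 0, ζ 1, ζ 2] [ζ 4, ζ 3, ζ 2] (ζ 3) (ζ 1) (c13).symm
  have sa19 : HurwitzEquiv [ζ 0, ζ 1, ζ 2, ζ 0, ζ 1, ζ 2, ζ 3, ζ 0, ζ 1, ζ 2, ζ 1, ζ 3, ζ 4, ζ 3, ζ 2] [ζ 0, ζ 1, ζ 2, ζ 0, ζ 1, ζ 2, ζ 3, ζ 0, ζ 2, ζ 1, ζ 2, ζ 3, ζ 4, ζ 3, ζ 2] :=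
    he_braid [ζ 0, ζ 1, ζ 2, ζ 0, ζ 1, ζ 2, ζ 3, ζ 0] [ζ 3, ζ 4, ζ 3, ζ 2] (ζ 1) (ζ 2) b1
  have sa20 : HurwitzEquiv [ζ 0, ζ 1, ζ 2, ζ 0, ζ 1, ζ 2, ζ 3, ζ 0, ζ 2, ζ 1, ζ 2, ζ 3, ζ 4, ζ 3, ζ 2] [ζ 0, ζ 1, ζ 2, ζ 0, ζ 1, ζ 2, ζ 3, ζ 2, ζ 0, ζ 1, ζ 2, ζ 3, ζ 4, ζ 3, ζ 2] :=
    he_swap [ζ 0, ζ 1, ζ 2, ζ 0, ζ 1, ζ 2, ζ 3] [ζ 1, ζ 2, ζ 3, ζ 4, ζ 3, ζ 2] (ζ 0) (ζ 2) c02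
  have sa21 : HurwitzEquiv [ζ 0, ζ 1, ζ 2, ζ 0, ζ 1, ζ 2, ζ 3, ζ 2, ζ 0, ζ 1, ζ 2, ζ 3, ζ 4, ζ 3, ζ 2] [ζ 0, ζ 1, ζ 2, ζ 0, ζ 1, ζ 3, ζ 2, ζ 3, ζ 0, ζ 1, ζ 2, ζ 3, ζ 4, ζ 3, ζ 2] :=
    he_braid [ζ 0, ζ 1, ζ 2, ζ 0, ζ 1] [ζ 0, ζ 1, ζ 2, ζ 3, ζ 4, ζ 3, ζ 2] (ζ 2) (ζ 3) b2
  have sa22 : HurwitzEquiv [ζ 0, ζ 1, ζ 2, ζ 0, ζ 1, ζ 3, ζ 2, ζ 3, ζ 0, ζ 1, ζ 2, ζ 3, ζ 4, ζ 3, ζ 2] [ζ 0, ζ 1, ζ 2, ζ 0, ζ 3, ζ 1, ζ 2, ζ 3, ζ 0, ζ 1, ζ 2, ζ 3, ζ 4, ζ 3, ζ 2] :=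
    he_swap [ζ 0, ζ 1, ζ 2, ζ 0] [ζ 2, ζ 3, ζ 0, ζ 1, ζ 2, ζ 3, ζ 4, ζ 3, ζ 2] (ζ 1) (ζ 3) c13
  have sa23 : HurwitzEquiv [ζ 0, ζ 1, ζ 2, ζ 0, ζ 3, ζ 1, ζ 2, ζ 3, ζ 0, ζ 1, ζ 2, ζ 3, ζ 4, ζ 3, ζ 2] [ζ 0, ζ 1, ζ 2, ζ 3, ζ 0, ζ 1, ζ 2, ζ 3, ζ 0, ζ 1, ζ 2, ζ 3, ζ 4, ζ 3, ζ 2] :=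
    he_swap [ζ 0, ζ 1, ζ 2] [ζ 1, ζ 2, ζ 3, ζ 0, ζ 1, ζ 2, ζ 3, ζ 4, ζ 3, ζ 2] (ζ 0) (ζ 3) c03
  have sa24 : HurwitzEquiv [ζ 0, ζ 1, ζ 2, ζ 3, ζ 0, ζ 1, ζ 2, ζ 3, ζ 0, ζ 1, ζ 2, ζ 3, ζ 4, ζ 3, ζ 2] [ζ 0, ζ 1, ζ 2, ζ 3, ζ 0, ζ 1, ζ 2, ζ 3, ζ 0, ζ 1, ζ 2, ζ 4, ζ 3, ζ 4, ζ 2] :=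
    he_braid [ζ 0, ζ 1, ζ 2, ζ 3, ζ 0, ζ 1, ζ 2, ζ 3, ζ 0, ζ 1, ζ 2] [ζ 2] (ζ 3) (ζ 4) b3
  have sa25 : HurwitzEquiv [ζ 0, ζ 1, ζ 2, ζ 3, ζ 0, ζ 1, ζ 2, ζ 3, ζ 0, ζ 1, ζ 2, ζ 4, ζ 3, ζ 4, ζ 2] [ζ 0, ζ 1, ζ 2, ζ 3, ζ 0, ζ 1, ζ 2, ζ 3, ζ 0, ζ 1, ζ 4, ζ 2, ζ 3, ζ 4, ζ 2] :=
    he_swap [ζ 0, ζ 1, ζ 2, ζ 3, ζ 0, ζ 1, ζ 2, ζ 3, ζ 0, ζ 1] [ζ 3, ζ 4, ζ 2] (ζ 2) (ζ 4) c24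
  have sa26 : HurwitzEquiv [ζ 0, ζ 1, ζ 2, ζ 3, ζ 0, ζ 1, ζ 2, ζ 3, ζ 0, ζ 1, ζ 4, ζ 2, ζ 3, ζ 4, ζ 2] [ζ 0, ζ 1, ζ 2, ζ 3, ζ 0, ζ 1, ζ 2, ζ 3, ζ 0, ζ 4, ζ 1, ζ 2, ζ 3, ζ 4, ζ 2] :=
    he_swap [ζ 0, ζ 1, ζ 2, ζ 3, ζ 0, ζ 1, ζ 2, ζ 3, ζ 0] [ζ 2, ζ 3, ζ 4, ζ 2] (ζ 1) (ζ 4) c14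
  have sa27 : HurwitzEquiv [ζ 0, ζ 1, ζ 2, ζ 3, ζ 0, ζ 1, ζ 2, ζ 3, ζ 0, ζ 4, ζ 1, ζ 2, ζ 3, ζ 4, ζ 2] [ζ 0, ζ 1, ζ 2, ζ 3, ζ 0, ζ 1, ζ 2, ζ 3, ζ 4, ζ 0, ζ 1, ζ 2, ζ 3, ζ 4, ζ 2] :=
    he_swap [ζ 0, ζ 1, ζ 2, ζ 3, ζ 0, ζ 1, ζ 2, ζ 3] [ζ 1, ζ 2, ζ 3, ζ 4, ζ 2] (ζ 0) (ζ 4) c04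
  have sa28 : HurwitzEquiv [ζ 0, ζ 1, ζ 2, ζ 3, ζ 0, ζ 1, ζ 2, ζ 3, ζ 4, ζ 0, ζ 1, ζ 2, ζ 3, ζ 4, ζ 2] [ζ 0, ζ 1, ζ 2, ζ 3, ζ 0, ζ 1, ζ 2, ζ 3, ζ 4, ζ 0, ζ 1, ζ 2, ζ 3, ζ 2, ζ 4] :=
    he_swap [ζ 0, ζ 1, ζ 2, ζ 3, ζ 0, ζ 1, ζ 2, ζ 3, ζ 4, ζ 0, ζ 1, ζ 2, ζ 3] [] (ζ 4) (ζ 2) (c24).symm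
  have sa29 : HurwitzEquiv [ζ 0, ζ 1, ζ 2, ζ 3, ζ 0, ζ 1, ζ 2, ζ 3, ζ 4, ζ 0, ζ 1, ζ 2, ζ 3, ζ 2, ζ 4] [ζ 0, ζ 1, ζ 2, ζ 3, ζ 0, ζ 1, ζ 2, ζ 3, ζ 4, ζ 0, ζ 1, ζ 3, ζ 2, ζ 3, ζ 4] :=
    he_braid [ζ 0, ζ 1, ζ 2, ζ 3, ζ 0, ζ 1, ζ 2, ζ 3, ζ 4, ζ 0, ζ 1] [ζ 4] (ζ 2) (ζ 3) b2
  have sa30 : HurwitzEquiv [ζ 0, ζ 1, ζ 2, ζ 3, ζ 0, ζ 1, ζ 2, ζ 3, ζ 4, ζ 0, ζ 1, ζ 3, ζ 2, ζ 3, ζ 4] [ζ 0, ζ 1, ζ 2, ζ 3, ζ 0, ζ 1, ζ 2, ζ 3, ζ 4, ζ 0, ζ 3, ζ 1, ζ 2, ζ 3, ζ 4] :=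
    he_swap [ζ 0, ζ 1, ζ 2, ζ 3, ζ 0, ζ 1, ζ 2, ζ 3, ζ 4, ζ 0] [ζ 2, ζ 3, ζ 4] (ζ 1) (ζ 3) c13
  have sa31 : HurwitzEquiv [ζ 0, ζ 1, ζ 2, ζ 3, ζ 0, ζ 1, ζ 2, ζ 3, ζ 4, ζ 0, ζ 3, ζ 1, ζ 2, ζ 3, ζ 4] [ζ 0, ζ 1, ζ 2, ζ 3, ζ 0, ζ 1, ζ 2, ζ 3, ζ 4, ζ 3, ζ 0, ζ 1, ζ 2, ζ 3, ζ 4] :=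
    he_swap [ζ 0, ζ 1, ζ 2, ζ 3, ζ 0, ζ 1, ζ 2, ζ 3, ζ 4] [ζ 1, ζ 2, ζ 3, ζ 4] (ζ 0) (ζ 3) c03
  have sa32 : HurwitzEquiv [ζ 0, ζ 1, ζ 2, ζ 3, ζ 0, ζ 1, ζ 2, ζ 3, ζ 4, ζ 3, ζ 0, ζ 1, ζ 2, ζ 3, ζ 4] [ζ 0, ζ 1, ζ 2, ζ 3, ζ 0, ζ 1, ζ 2, ζ 4, ζ 3, ζ 4, ζ 0, ζ 1, ζ 2, ζ 3, ζ 4] :=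
    he_braid [ζ 0, ζ 1, ζ 2, ζ 3, ζ 0, ζ 1, ζ 2] [ζ 0, ζ 1, ζ 2, ζ 3, ζ 4] (ζ 3) (ζ 4) b3
  have sa33 : HurwitzEquiv [ζ 0, ζ 1, ζ 2, ζ 3, ζ 0, ζ 1, ζ 2, ζ 4, ζ 3, ζ 4, ζ 0, ζ 1, ζ 2, ζ 3, ζ 4] [ζ 0, ζ 1, ζ 2, ζ 3, ζ 0, ζ 1, ζ 4, ζ 2, ζ 3, ζ 4, ζ 0, ζ 1, ζ 2, ζ 3, ζ 4] :=
    he_swap [ζ 0, ζ 1, ζ 2, ζ 3, ζ 0, ζ 1] [ζ 3, ζ 4, ζ 0, ζ 1, ζ 2, ζ 3, ζ 4] (ζ 2) (ζ 4) c24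
  have sa34 : HurwitzEquiv [ζ 0, ζ 1, ζ 2, ζ 3, ζ 0, ζ 1, ζ 4, ζ 2, ζ 3, ζ 4, ζ 0, ζ 1, ζ 2, ζ 3, ζ 4] [ζ 0, ζ 1, ζ 2, ζ 3, ζ 0, ζ 4, ζ 1, ζ 2, ζ 3, ζ 4, ζ 0, ζ 1, ζ 2, ζ 3, ζ 4] :=
    he_swap [ζ 0, ζ 1, ζ 2, ζ 3, ζ 0] [ζ 2, ζ 3, ζ 4, ζ 0, ζ 1, ζ 2, ζ 3, ζ 4] (ζ 1) (ζ 4) c14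
  have sa35 : HurwitzEquiv [ζ 0, ζ 1, ζ 2, ζ 3, ζ 0, ζ 4, ζ 1, ζ 2, ζ 3, ζ 4, ζ 0, ζ 1, ζ 2, ζ 3, ζ 4] [ζ 0, ζ 1, ζ 2, ζ 3, ζ 4, ζ 0, ζ 1, ζ 2, ζ 3, ζ 4, ζ 0, ζ 1, ζ 2, ζ 3, ζ 4] :=
    he_swap [ζ 0, ζ 1, ζ 2, ζ 3] [ζ 1, ζ 2, ζ 3, ζ 4, ζ 0, ζ 1, ζ 2, ζ 3, ζ 4] (ζ 0) (ζ 4) c04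
  exact he_trans (he_trans (he_trans (he_trans (he_trans (he_trans (he_trans (he_trans (he_trans (he_trans (he_trans (he_trans (he_trans (he_trans (he_trans (he_trans (he_trans (he_trans (he_trans (he_trans (he_trans (he_trans (he_trans (he_trans (he_trans (he_trans (he_trans (he_trans (he_trans (he_trans (he_trans (he_trans (he_trans (he_trans (he_trans sa0 sa1) sa2) sa3) sa4) sa5) sa6) sa7) sa8) sa9) sa10) sa11) sa12) sa13) sa14) sa15) sa16) sa17) sa18) sa19) sa20) sa21) sa22) sa23) sa24) sa25) sa26) sa27) sa28) sa29) sa30) sa31) sa32) sa33) sa34) sa35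

lemma chainB : HurwitzEquiv [ζ 3, ζ 4, ζ 3, ζ 4, ζ 3, ζ 4, ζ 2, ζ 3, ζ 4, ζ 1, ζ 2, ζ 3, ζ 0, ζ 1, ζ 2] [ζ 2, ζ 3, ζ 4, ζ 1, ζ 2, ζ 3, ζ 0, ζ 1, ζ 2, ζ 0, ζ 1, ζ 0, ζ 1, ζ 0, ζ 1] := by
  have sb0 : HurwitzEquiv [ζ 3, ζ 4, ζ 3, ζ 4, ζ 3, ζ 4, ζ 2, ζ 3, ζ 4, ζ 1, ζ 2, ζ 3, ζ 0, ζ 1, ζ 2] [ζ 3, ζ 4, ζ 3, ζ 4, ζ 3, ζ 2, ζ 4, ζ 3, ζ 4, ζ 1, ζ 2, ζ 3, ζ 0, ζ 1, ζ 2] :=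
    he_swap [ζ 3, ζ 4, ζ 3, ζ 4, ζ 3] [ζ 3, ζ 4, ζ 1, ζ 2, ζ 3, ζ 0, ζ 1, ζ 2] (ζ 4) (ζ 2) (c24).symm
  have sb1 : HurwitzEquiv [ζ 3, ζ 4, ζ 3, ζ 4, ζ 3, ζ 2, ζ 4, ζ 3, ζ 4, ζ 1, ζ 2, ζ 3, ζ 0, ζ 1, ζ 2] [ζ 3, ζ 4, ζ 3, ζ 4, ζ 3, ζ 2, ζ 3, ζ 4, ζ 3, ζ 1, ζ 2, ζ 3, ζ 0, ζ 1, ζ 2] :=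
    he_braid [ζ 3, ζ 4, ζ 3, ζ 4, ζ 3, ζ 2] [ζ 1, ζ 2, ζ 3, ζ 0, ζ 1, ζ 2] (ζ 4) (ζ 3) (b3).symm
  have sb2 : HurwitzEquiv [ζ 3, ζ 4, ζ 3, ζ 4, ζ 3, ζ 2, ζ 3, ζ 4, ζ 3, ζ 1, ζ 2, ζ 3, ζ 0, ζ 1, ζ 2] [ζ 3, ζ 4, ζ 3, ζ 4, ζ 3, ζ 2, ζ 3, ζ 4, ζ 1, ζ 3, ζ 2, ζ 3, ζ 0, ζ 1, ζ 2] :=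
    he_swap [ζ 3, ζ 4, ζ 3, ζ 4, ζ 3, ζ 2, ζ 3, ζ 4] [ζ 2, ζ 3, ζ 0, ζ 1, ζ 2] (ζ 3) (ζ 1) (c13).symm
  have sb3 : HurwitzEquiv [ζ 3, ζ 4, ζ 3, ζ 4, ζ 3, ζ 2, ζ 3, ζ 4, ζ 1, ζ 3, ζ 2, ζ 3, ζ 0, ζ 1, ζ 2] [ζ 3, ζ 4, ζ 3, ζ 4, ζ 2, ζ 3, ζ 2, ζ 4, ζ 1, ζ 3, ζ 2, ζ 3, ζ 0, ζ 1, ζ 2] :=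
    he_braid [ζ 3, ζ 4, ζ 3, ζ 4] [ζ 4, ζ 1, ζ 3, ζ 2, ζ 3, ζ 0, ζ 1, ζ 2] (ζ 3) (ζ 2) (b2).symm
  have sb4 : HurwitzEquiv [ζ 3, ζ 4, ζ 3, ζ 4, ζ 2, ζ 3, ζ 2, ζ 4, ζ 1, ζ 3, ζ 2, ζ 3, ζ 0, ζ 1, ζ 2] [ζ 3, ζ 4, ζ 3, ζ 2, ζ 4, ζ 3, ζ 2, ζ 4, ζ 1, ζ 3, ζ 2, ζ 3, ζ 0, ζ 1, ζ 2] :=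
    he_swap [ζ 3, ζ 4, ζ 3] [ζ 3, ζ 2, ζ 4, ζ 1, ζ 3, ζ 2, ζ 3, ζ 0, ζ 1, ζ 2] (ζ 4) (ζ 2) (c24).symm
  have sb5 : HurwitzEquiv [ζ 3, ζ 4, ζ 3, ζ 2, ζ 4, ζ 3, ζ 2, ζ 4, ζ 1, ζ 3, ζ 2, ζ 3, ζ 0, ζ 1, ζ 2] [ζ 3, ζ 4, ζ 3, ζ 2, ζ 4, ζ 3, ζ 4, ζ 2, ζ 1, ζ 3, ζ 2, ζ 3, ζ 0, ζ 1, ζ 2] :=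
    he_swap [ζ 3, ζ 4, ζ 3, ζ 2, ζ 4, ζ 3] [ζ 1, ζ 3, ζ 2, ζ 3, ζ 0, ζ 1, ζ 2] (ζ 2) (ζ 4) c24
  have sb6 : HurwitzEquiv [ζ 3, ζ 4, ζ 3, ζ 2, ζ 4, ζ 3, ζ 4, ζ 2, ζ 1, ζ 3, ζ 2, ζ 3, ζ 0, ζ 1, ζ 2] [ζ 3, ζ 4, ζ 3, ζ 2, ζ 3, ζ 4, ζ 3, ζ 2, ζ 1, ζ 3, ζ 2, ζ 3, ζ 0, ζ 1, ζ 2] :=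
    he_braid [ζ 3, ζ 4, ζ 3, ζ 2] [ζ 2, ζ 1, ζ 3, ζ 2, ζ 3, ζ 0, ζ 1, ζ 2] (ζ 4) (ζ 3) (b3).symm
  have sb7 : HurwitzEquiv [ζ 3, ζ 4, ζ 3, ζ 2, ζ 3, ζ 4, ζ 3, ζ 2, ζ 1, ζ 3, ζ 2, ζ 3, ζ 0, ζ 1, ζ 2] [ζ 3, ζ 4, ζ 2, ζ 3, ζ 2, ζ 4, ζ 3, ζ 2, ζ 1, ζ 3, ζ 2, ζ 3, ζ 0, ζ 1, ζ 2] :=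
    he_braid [ζ 3, ζ 4] [ζ 4, ζ 3, ζ 2, ζ 1, ζ 3, ζ 2, ζ 3, ζ 0, ζ 1, ζ 2] (ζ 3) (ζ 2) (b2).symm
  have sb8 : HurwitzEquiv [ζ 3, ζ 4, ζ 2, ζ 3, ζ 2, ζ 4, ζ 3, ζ 2, ζ 1, ζ 3, ζ 2, ζ 3, ζ 0, ζ 1, ζ 2] [ζ 3, ζ 2, ζ 4, ζ 3, ζ 2, ζ 4, ζ 3, ζ 2, ζ 1, ζ 3, ζ 2, ζ 3, ζ 0, ζ 1, ζ 2] :=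
    he_swap [ζ 3] [ζ 3, ζ 2, ζ 4, ζ 3, ζ 2, ζ 1, ζ 3, ζ 2, ζ 3, ζ 0, ζ 1, ζ 2] (ζ 4) (ζ 2) (c24).symm
  have sb9 : HurwitzEquiv [ζ 3, ζ 2, ζ 4, ζ 3, ζ 2, ζ 4, ζ 3, ζ 2, ζ 1, ζ 3, ζ 2, ζ 3, ζ 0, ζ 1, ζ 2] [ζ 3, ζ 2, ζ 4, ζ 3, ζ 4, ζ 2, ζ 3, ζ 2, ζ 1, ζ 3, ζ 2, ζ 3, ζ 0, ζ 1, ζ 2] :=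
    he_swap [ζ 3, ζ 2, ζ 4, ζ 3] [ζ 3, ζ 2, ζ 1, ζ 3, ζ 2, ζ 3, ζ 0, ζ 1, ζ 2] (ζ 2) (ζ 4) c24
  have sb10 : HurwitzEquiv [ζ 3, ζ 2, ζ 4, ζ 3, ζ 4, ζ 2, ζ 3, ζ 2, ζ 1, ζ 3, ζ 2, ζ 3, ζ 0, ζ 1, ζ 2] [ζ 3, ζ 2, ζ 3, ζ 4, ζ 3, ζ 2, ζ 3, ζ 2, ζ 1, ζ 3, ζ 2, ζ 3, ζ 0, ζ 1, ζ 2] :=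
    he_braid [ζ 3, ζ 2] [ζ 2, ζ 3, ζ 2, ζ 1, ζ 3, ζ 2, ζ 3, ζ 0, ζ 1, ζ 2] (ζ 4) (ζ 3) (b3).symm
  have sb11 : HurwitzEquiv [ζ 3, ζ 2, ζ 3, ζ 4, ζ 3, ζ 2, ζ 3, ζ 2, ζ 1, ζ 3, ζ 2, ζ 3, ζ 0, ζ 1, ζ 2] [ζ 2, ζ 3, ζ 2, ζ 4, ζ 3, ζ 2, ζ 3, ζ 2, ζ 1, ζ 3, ζ 2, ζ 3, ζ 0, ζ 1, ζ 2] :=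
    he_braid [] [ζ 4, ζ 3, ζ 2, ζ 3, ζ 2, ζ 1, ζ 3, ζ 2, ζ 3, ζ 0, ζ 1, ζ 2] (ζ 3) (ζ 2) (b2).symm
  have sb12 : HurwitzEquiv [ζ 2, ζ 3, ζ 2, ζ 4, ζ 3, ζ 2, ζ 3, ζ 2, ζ 1, ζ 3, ζ 2, ζ 3, ζ 0, ζ 1, ζ 2] [ζ 2, ζ 3, ζ 4, ζ 2, ζ 3, ζ 2, ζ 3, ζ 2, ζ 1, ζ 3, ζ 2, ζ 3, ζ 0, ζ 1, ζ 2] :=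
    he_swap [ζ 2, ζ 3] [ζ 3, ζ 2, ζ 3, ζ 2, ζ 1, ζ 3, ζ 2, ζ 3, ζ 0, ζ 1, ζ 2] (ζ 2) (ζ 4) c24
  have sb13 : HurwitzEquiv [ζ 2, ζ 3, ζ 4, ζ 2, ζ 3, ζ 2, ζ 3, ζ 2, ζ 1, ζ 3, ζ 2, ζ 3, ζ 0, ζ 1, ζ 2] [ζ 2, ζ 3, ζ 4, ζ 2, ζ 3, ζ 2, ζ 3, ζ 2, ζ 1, ζ 2, ζ 3, ζ 2, ζ 0, ζ 1, ζ 2] :=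
    he_braid [ζ 2, ζ 3, ζ 4, ζ 2, ζ 3, ζ 2, ζ 3, ζ 2, ζ 1] [ζ 0, ζ 1, ζ 2] (ζ 3) (ζ 2) (b2).symm
  have sb14 : HurwitzEquiv [ζ 2, ζ 3, ζ 4, ζ 2, ζ 3, ζ 2, ζ 3, ζ 2, ζ 1, ζ 2, ζ 3, ζ 2, ζ 0, ζ 1, ζ 2] [ζ 2, ζ 3, ζ 4, ζ 2, ζ 3, ζ 2, ζ 3, ζ 2, ζ 1, ζ 2, ζ 3, ζ 0, ζ 2, ζ 1, ζ 2] :=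
    he_swap [ζ 2, ζ 3, ζ 4, ζ 2, ζ 3, ζ 2, ζ 3, ζ 2, ζ 1, ζ 2, ζ 3] [ζ 1, ζ 2] (ζ 2) (ζ 0) (c02).symm
  have sb15 : HurwitzEquiv [ζ 2, ζ 3, ζ 4, ζ 2, ζ 3, ζ 2, ζ 3, ζ 2, ζ 1, ζ 2, ζ 3, ζ 0, ζ 2, ζ 1, ζ 2] [ζ 2, ζ 3, ζ 4, ζ 2, ζ 3, ζ 2, ζ 3, ζ 1, ζ 2, ζ 1, ζ 3, ζ 0, ζ 2, ζ 1, ζ 2] :=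
    he_braid [ζ 2, ζ 3, ζ 4, ζ 2, ζ 3, ζ 2, ζ 3] [ζ 3, ζ 0, ζ 2, ζ 1, ζ 2] (ζ 2) (ζ 1) (b1).symm
  have sb16 : HurwitzEquiv [ζ 2, ζ 3, ζ 4, ζ 2, ζ 3, ζ 2, ζ 3, ζ 1, ζ 2, ζ 1, ζ 3, ζ 0, ζ 2, ζ 1, ζ 2] [ζ 2, ζ 3, ζ 4, ζ 2, ζ 3, ζ 2, ζ 1, ζ 3, ζ 2, ζ 1, ζ 3, ζ 0, ζ 2, ζ 1, ζ 2] :=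
    he_swap [ζ 2, ζ 3, ζ 4, ζ 2, ζ 3, ζ 2] [ζ 2, ζ 1, ζ 3, ζ 0, ζ 2, ζ 1, ζ 2] (ζ 3) (ζ 1) (c13).symm
  have sb17 : HurwitzEquiv [ζ 2, ζ 3, ζ 4, ζ 2, ζ 3, ζ 2, ζ 1, ζ 3, ζ 2, ζ 1, ζ 3, ζ 0, ζ 2, ζ 1, ζ 2] [ζ 2, ζ 3, ζ 4, ζ 2, ζ 3, ζ 2, ζ 1, ζ 3, ζ 2, ζ 3, ζ 1, ζ 0, ζ 2, ζ 1, ζ 2] :=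
    he_swap [ζ 2, ζ 3, ζ 4, ζ 2, ζ 3, ζ 2, ζ 1, ζ 3, ζ 2] [ζ 0, ζ 2, ζ 1, ζ 2] (ζ 1) (ζ 3) c13
  have sb18 : HurwitzEquiv [ζ 2, ζ 3, ζ 4, ζ 2, ζ 3, ζ 2, ζ 1, ζ 3, ζ 2, ζ 3, ζ 1, ζ 0, ζ 2, ζ 1, ζ 2] [ζ 2, ζ 3, ζ 4, ζ 2, ζ 3, ζ 2, ζ 1, ζ 2, ζ 3, ζ 2, ζ 1, ζ 0, ζ 2, ζ 1, ζ 2] :=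
    he_braid [ζ 2, ζ 3, ζ 4, ζ 2, ζ 3, ζ 2, ζ 1] [ζ 1, ζ 0, ζ 2, ζ 1, ζ 2] (ζ 3) (ζ 2) (b2).symm
  have sb19 : HurwitzEquiv [ζ 2, ζ 3, ζ 4, ζ 2, ζ 3, ζ 2, ζ 1, ζ 2, ζ 3, ζ 2, ζ 1, ζ 0, ζ 2, ζ 1, ζ 2] [ζ 2, ζ 3, ζ 4, ζ 2, ζ 3, ζ 1, ζ 2, ζ 1, ζ 3, ζ 2, ζ 1, ζ 0, ζ 2, ζ 1, ζ 2] :=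
    he_braid [ζ 2, ζ 3, ζ 4, ζ 2, ζ 3] [ζ 3, ζ 2, ζ 1, ζ 0, ζ 2, ζ 1, ζ 2] (ζ 2) (ζ 1) (b1).symm
  have sb20 : HurwitzEquiv [ζ 2, ζ 3, ζ 4, ζ 2, ζ 3, ζ 1, ζ 2, ζ 1, ζ 3, ζ 2, ζ 1, ζ 0, ζ 2, ζ 1, ζ 2] [ζ 2, ζ 3, ζ 4, ζ 2, ζ 1, ζ 3, ζ 2, ζ 1, ζ 3, ζ 2, ζ 1, ζ 0, ζ 2, ζ 1, ζ 2] :=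
    he_swap [ζ 2, ζ 3, ζ 4, ζ 2] [ζ 2, ζ 1, ζ 3, ζ 2, ζ 1, ζ 0, ζ 2, ζ 1, ζ 2] (ζ 3) (ζ 1) (c13).symm
  have sb21 : HurwitzEquiv [ζ 2, ζ 3, ζ 4, ζ 2, ζ 1, ζ 3, ζ 2, ζ 1, ζ 3, ζ 2, ζ 1, ζ 0, ζ 2, ζ 1, ζ 2] [ζ 2, ζ 3, ζ 4, ζ 2, ζ 1, ζ 3, ζ 2, ζ 3, ζ 1, ζ 2, ζ 1, ζ 0, ζ 2, ζ 1, ζ 2] :=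
    he_swap [ζ 2, ζ 3, ζ 4, ζ 2, ζ 1, ζ 3, ζ 2] [ζ 2, ζ 1, ζ 0, ζ 2, ζ 1, ζ 2] (ζ 1) (ζ 3) c13
  have sb22 : HurwitzEquiv [ζ 2, ζ 3, ζ 4, ζ 2, ζ 1, ζ 3, ζ 2, ζ 3, ζ 1, ζ 2, ζ 1, ζ 0, ζ 2, ζ 1, ζ 2] [ζ 2, ζ 3, ζ 4, ζ 2, ζ 1, ζ 2, ζ 3, ζ 2, ζ 1, ζ 2, ζ 1, ζ 0, ζ 2, ζ 1, ζ 2] :=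
    he_braid [ζ 2, ζ 3, ζ 4, ζ 2, ζ 1] [ζ 1, ζ 2, ζ 1, ζ 0, ζ 2, ζ 1, ζ 2] (ζ 3) (ζ 2) (b2).symm
  have sb23 : HurwitzEquiv [ζ 2, ζ 3, ζ 4, ζ 2, ζ 1, ζ 2, ζ 3, ζ 2, ζ 1, ζ 2, ζ 1, ζ 0, ζ 2, ζ 1, ζ 2] [ζ 2, ζ 3, ζ 4, ζ 1, ζ 2, ζ 1, ζ 3, ζ 2, ζ 1, ζ 2, ζ 1, ζ 0, ζ 2, ζ 1, ζ 2] :=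
    he_braid [ζ 2, ζ 3, ζ 4] [ζ 3, ζ 2, ζ 1, ζ 2, ζ 1, ζ 0, ζ 2, ζ 1, ζ 2] (ζ 2) (ζ 1) (b1).symm
  have sb24 : HurwitzEquiv [ζ 2, ζ 3, ζ 4, ζ 1, ζ 2, ζ 1, ζ 3, ζ 2, ζ 1, ζ 2, ζ 1, ζ 0, ζ 2, ζ 1, ζ 2] [ζ 2, ζ 3, ζ 4, ζ 1, ζ 2, ζ 3, ζ 1, ζ 2, ζ 1, ζ 2, ζ 1, ζ 0, ζ 2, ζ 1, ζ 2] :=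
    he_swap [ζ 2, ζ 3, ζ 4, ζ 1, ζ 2] [ζ 2, ζ 1, ζ 2, ζ 1, ζ 0, ζ 2, ζ 1, ζ 2] (ζ 1) (ζ 3) c13
  have sb25 : HurwitzEquiv [ζ 2, ζ 3, ζ 4, ζ 1, ζ 2, ζ 3, ζ 1, ζ 2, ζ 1, ζ 2, ζ 1, ζ 0, ζ 2, ζ 1, ζ 2] [ζ 2, ζ 3, ζ 4, ζ 1, ζ 2, ζ 3, ζ 1, ζ 2, ζ 1, ζ 2, ζ 1, ζ 0, ζ 1, ζ 2, ζ 1] :=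
    he_braid [ζ 2, ζ 3, ζ 4, ζ 1, ζ 2, ζ 3, ζ 1, ζ 2, ζ 1, ζ 2, ζ 1, ζ 0] [] (ζ 2) (ζ 1) (b1).symm
  have sb26 : HurwitzEquiv [ζ 2, ζ 3, ζ 4, ζ 1, ζ 2, ζ 3, ζ 1, ζ 2, ζ 1, ζ 2, ζ 1, ζ 0, ζ 1, ζ 2, ζ 1] [ζ 2, ζ 3, ζ 4, ζ 1, ζ 2, ζ 3, ζ 1, ζ 2, ζ 1, ζ 2, ζ 0, ζ 1, ζ 0, ζ 2, ζ 1] :=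
    he_braid [ζ 2, ζ 3, ζ 4, ζ 1, ζ 2, ζ 3, ζ 1, ζ 2, ζ 1, ζ 2] [ζ 2, ζ 1] (ζ 1) (ζ 0) (b0).symm
  have sb27 : HurwitzEquiv [ζ 2, ζ 3, ζ 4, ζ 1, ζ 2, ζ 3, ζ 1, ζ 2, ζ 1, ζ 2, ζ 0, ζ 1, ζ 0, ζ 2, ζ 1] [ζ 2, ζ 3, ζ 4, ζ 1, ζ 2, ζ 3, ζ 1, ζ 2, ζ 1, ζ 0, ζ 2, ζ 1, ζ 0, ζ 2, ζ 1] :=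
    he_swap [ζ 2, ζ 3, ζ 4, ζ 1, ζ 2, ζ 3, ζ 1, ζ 2, ζ 1] [ζ 1, ζ 0, ζ 2, ζ 1] (ζ 2) (ζ 0) (c02).symm
  have sb28 : HurwitzEquiv [ζ 2, ζ 3, ζ 4, ζ 1, ζ 2, ζ 3, ζ 1, ζ 2, ζ 1, ζ 0, ζ 2, ζ 1, ζ 0, ζ 2, ζ 1] [ζ 2, ζ 3, ζ 4, ζ 1, ζ 2, ζ 3, ζ 1, ζ 2, ζ 1, ζ 0, ζ 2, ζ 1, ζ 2, ζ 0, ζ 1] :=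
    he_swap [ζ 2, ζ 3, ζ 4, ζ 1, ζ 2, ζ 3, ζ 1, ζ 2, ζ 1, ζ 0, ζ 2, ζ 1] [ζ 1] (ζ 0) (ζ 2) c02
  have sb29 : HurwitzEquiv [ζ 2, ζ 3, ζ 4, ζ 1, ζ 2, ζ 3, ζ 1, ζ 2, ζ 1, ζ 0, ζ 2, ζ 1, ζ 2, ζ 0, ζ 1] [ζ 2, ζ 3, ζ 4, ζ 1, ζ 2, ζ 3, ζ 1, ζ 2, ζ 1, ζ 0, ζ 1, ζ 2, ζ 1, ζ 0, ζ 1] :=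
    he_braid [ζ 2, ζ 3, ζ 4, ζ 1, ζ 2, ζ 3, ζ 1, ζ 2, ζ 1, ζ 0] [ζ 0, ζ 1] (ζ 2) (ζ 1) (b1).symm
  have sb30 : HurwitzEquiv [ζ 2, ζ 3, ζ 4, ζ 1, ζ 2, ζ 3, ζ 1, ζ 2, ζ 1, ζ 0, ζ 1, ζ 2, ζ 1, ζ 0, ζ 1] [ζ 2, ζ 3, ζ 4, ζ 1, ζ 2, ζ 3, ζ 1, ζ 2, ζ 0, ζ 1, ζ 0, ζ 2, ζ 1, ζ 0, ζ 1] :=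
    he_braid [ζ 2, ζ 3, ζ 4, ζ 1, ζ 2, ζ 3, ζ 1, ζ 2] [ζ 2, ζ 1, ζ 0, ζ 1] (ζ 1) (ζ 0) (b0).symm
  have sb31 : HurwitzEquiv [ζ 2, ζ 3, ζ 4, ζ 1, ζ 2, ζ 3, ζ 1, ζ 2, ζ 0, ζ 1, ζ 0, ζ 2, ζ 1, ζ 0, ζ 1] [ζ 2, ζ 3, ζ 4, ζ 1, ζ 2, ζ 3, ζ 1, ζ 0, ζ 2, ζ 1, ζ 0, ζ 2, ζ 1, ζ 0, ζ 1] :=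
    he_swap [ζ 2, ζ 3, ζ 4, ζ 1, ζ 2, ζ 3, ζ 1] [ζ 1, ζ 0, ζ 2, ζ 1, ζ 0, ζ 1] (ζ 2) (ζ 0) (c02).symm
  have sb32 : HurwitzEquiv [ζ 2, ζ 3, ζ 4, ζ 1, ζ 2, ζ 3, ζ 1, ζ 0, ζ 2, ζ 1, ζ 0, ζ 2, ζ 1, ζ 0, ζ 1] [ζ 2, ζ 3, ζ 4, ζ 1, ζ 2, ζ 3, ζ 1, ζ 0, ζ 2, ζ 1, ζ 2, ζ 0, ζ 1, ζ 0, ζ 1] :=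
    he_swap [ζ 2, ζ 3, ζ 4, ζ 1, ζ 2, ζ 3, ζ 1, ζ 0, ζ 2, ζ 1] [ζ 1, ζ 0, ζ 1] (ζ 0) (ζ 2) c02
  have sb33 : HurwitzEquiv [ζ 2, ζ 3, ζ 4, ζ 1, ζ 2, ζ 3, ζ 1, ζ 0, ζ 2, ζ 1, ζ 2, ζ 0, ζ 1, ζ 0, ζ 1] [ζ 2, ζ 3, ζ 4, ζ 1, ζ 2, ζ 3, ζ 1, ζ 0, ζ 1, ζ 2, ζ 1, ζ 0, ζ 1, ζ 0, ζ 1] :=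
    he_braid [ζ 2, ζ 3, ζ 4, ζ 1, ζ 2, ζ 3, ζ 1, ζ 0] [ζ 0, ζ 1, ζ 0, ζ 1] (ζ 2) (ζ 1) (b1).symm
  have sb34 : HurwitzEquiv [ζ 2, ζ 3, ζ 4, ζ 1, ζ 2, ζ 3, ζ 1, ζ 0, ζ 1, ζ 2, ζ 1, ζ 0, ζ 1, ζ 0, ζ 1] [ζ 2, ζ 3, ζ 4, ζ 1, ζ 2, ζ 3, ζ 0, ζ 1, ζ 0, ζ 2, ζ 1, ζ 0, ζ 1, ζ 0, ζ 1] :=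
    he_braid [ζ 2, ζ 3, ζ 4, ζ 1, ζ 2, ζ 3] [ζ 2, ζ 1, ζ 0, ζ 1, ζ 0, ζ 1] (ζ 1) (ζ 0) (b0).symm
  have sb35 : HurwitzEquiv [ζ 2, ζ 3, ζ 4, ζ 1, ζ 2, ζ 3, ζ 0, ζ 1, ζ 0, ζ 2, ζ 1, ζ 0, ζ 1, ζ 0, ζ 1] [ζ 2, ζ 3, ζ 4, ζ 1, ζ 2, ζ 3, ζ 0, ζ 1, ζ 2, ζ 0, ζ 1, ζ 0, ζ 1, ζ 0, ζ 1] :=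
    he_swap [ζ 2, ζ 3, ζ 4, ζ 1, ζ 2, ζ 3, ζ 0, ζ 1] [ζ 1, ζ 0, ζ 1, ζ 0, ζ 1] (ζ 0) (ζ 2) c02
  exact he_trans (he_trans (he_trans (he_trans (he_trans (he_trans (he_trans (he_trans (he_trans (he_trans (he_trans (he_trans (he_trans (he_trans (he_trans (he_trans (he_trans (he_trans (he_trans (he_trans (he_trans (he_trans (he_trans (he_trans (he_trans (he_trans (he_trans (he_trans (he_trans (he_trans (he_trans (he_trans (he_trans (he_trans (he_trans sb0 sb1) sb2) sb3) sb4) sb5) sb6) sb7) sb8) sb9) sb10) sb11) sb12) sb13) sb14) sb15) sb16) sb17) sb18) sb19) sb20) sb21) sb22) sb23) sb24) sb25) sb26) sb27) sb28) sb29) sb30) sb31) sb32) sb33) sb34) sb35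

/-- (a) `(ζ₁·ζ₂)³·Φ_f ∼ (ζ₁·ζ₂·ζ₃·ζ₄·ζ₅)³`; (b) `(ζ₄·ζ₅)³·(Φ_f)² ∼ Φ_f·(ζ₁·ζ₂·ζ₃·ζ₄·ζ₅)³`. -/
theorem Phi_factorization_identities :
    HurwitzEquiv ([ζ 0, ζ 1, ζ 0, ζ 1, ζ 0, ζ 1] ++ Φf)
      (fpow [ζ 0, ζ 1, ζ 2, ζ 3, ζ 4] 3) ∧
    HurwitzEquiv ([ζ 3, ζ 4, ζ 3, ζ 4, ζ 3, ζ 4] ++ (Φf ++ Φf))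
      (Φf ++ fpow [ζ 0, ζ 1, ζ 2, ζ 3, ζ 4] 3) := by
  constructor
  · exact chainA
  · have e1 : HurwitzEquiv
        ([ζ 3, ζ 4, ζ 3, ζ 4, ζ 3, ζ 4, ζ 2, ζ 3, ζ 4, ζ 1, ζ 2, ζ 3, ζ 0, ζ 1, ζ 2, ζ 2, ζ 3, ζ 4, ζ 1, ζ 2, ζ 3, ζ 0, ζ 1, ζ 2] : List Map₂)
        ([ζ 2, ζ 3, ζ 4, ζ 1, ζ 2, ζ 3, ζ 0, ζ 1, ζ 2, ζ 0, ζ 1, ζ 0, ζ 1, ζ 0, ζ 1, ζ 2, ζ 3, ζ 4, ζ 1, ζ 2, ζ 3, ζ 0, ζ 1, ζ 2] : List Map₂) :=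
      he_append_right [ζ 2, ζ 3, ζ 4, ζ 1, ζ 2, ζ 3, ζ 0, ζ 1, ζ 2] chainB
    have e2 : HurwitzEquiv
        ([ζ 2, ζ 3, ζ 4, ζ 1, ζ 2, ζ 3, ζ 0, ζ 1, ζ 2, ζ 0, ζ 1, ζ 0, ζ 1, ζ 0, ζ 1, ζ 2, ζ 3, ζ 4, ζ 1, ζ 2, ζ 3, ζ 0, ζ 1, ζ 2] : List Map₂)
        ([ζ 2, ζ 3, ζ 4, ζ 1, ζ 2, ζ 3, ζ 0, ζ 1, ζ 2, ζ 0, ζ 1, ζ 2, ζ 3, ζ 4, ζ 0, ζ 1, ζ 2, ζ 3, ζ 4, ζ 0, ζ 1, ζ 2, ζ 3, ζ 4] : List Map₂) :=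
      he_append_left [ζ 2, ζ 3, ζ 4, ζ 1, ζ 2, ζ 3, ζ 0, ζ 1, ζ 2] chainA
    exact he_trans e1 e2
end
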